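/- Let α ∈ (0,1) and let 𝒢₁, 𝒢₂ be comparable reconciled gene trees such that LR(𝒢₁) and LR(𝒢₂) are not isomorphic (𝒢₁ ≄_d 𝒢₂). Then PLR(𝒢₁, 𝒢₂) > 0. -/

import Mathlib

open SimpleGraph

attribute [local instance] Classical.propDecidable

/-- A rooted tree: a finite connected acyclic graph with a distinguished root. -/
structure RTree (V : Type*) [Fintype V] where
  adj : SimpleGraph V
  isTree : adj.IsTree
  root : V

variable {V : Type*} [Fintype V]

/-- `Anc T a b` : `a` is an ancestor of `b` (i.e. `b ⪯ a`), expressed as: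
`a` lies on the (unique) path from the root to `b`. -/
def Anc (T : RTree V) (a b : V) : Prop :=
  T.adj.dist T.root b = T.adj.dist T.root a + T.adj.dist a b

/-- `IsChild T c p` : `c` is a child of `p`. -/
def IsChild (T : RTree V) (c p : V) : Prop :=
  T.adj.Adj c p ∧ Anc T p c

/-- The set of children of `v`. -/
def childSet (T : RTree V) (v : V) : Set V := {c | IsChild T c v}

/-- A leaf is a node with no children. -/
def IsLeaf (T : RTree V) (v : V) : Prop := ∀ c, ¬ IsChild T c v

/-- The clade of `v`: the set of leaves descending from `v`. -/
def clade (T : RTree V) (v : V) : Set V := {x | IsLeaf T x ∧ Anc T v x}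

/-- `w` is the lowest common ancestor of the set `X` in `T`. -/
def IsLCA (T : RTree V) (X : Set V) (w : V) : Prop :=
  (∀ x ∈ X, Anc T w x) ∧ ∀ w', (∀ x ∈ X, Anc T w' x) → Anc T w' w

/-- A species tree is a rooted binary tree: every internal node has exactly two children. -/
def IsSpeciesTree (S : RTree V) : Prop :=
  ∀ v, ¬ IsLeaf S v → (childSet S v).ncard = 2

/-- Number of leaves of a rooted tree. -/
noncomputable def numLeaves (T : RTree V) : ℕ := {v | IsLeaf T v}.ncard

/-- `Hsum S` = `H(S)`: the sum of root-to-internal-node distances in `S`. -/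
noncomputable def Hsum (S : RTree V) : ℕ :=
  ∑ v : V, if IsLeaf S v then 0 else S.adj.dist S.root v

inductive Evt | dup | spec | extant
deriving DecidableEq

/-- A reconciled gene tree with species tree `S`, whose leaves are labeled bijectively by
the set of genes `Γ`. -/
structure Recon (Γ : Type*) (VG : Type*) (VS : Type*) [Fintype VG] [Fintype VS]
    (S : RTree VS) where
  tree : RTree VG
  geneLeaf : Γ → VG
  geneLeaf_inj : Function.Injective geneLeaf
  geneLeaf_range : ∀ v, IsLeaf tree v ↔ ∃ g, geneLeaf g = v
  μ : VG → VS
  lbl : VG → Evt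
  internal_children : ∀ v, ¬ IsLeaf tree v → 2 ≤ (childSet tree v).ncard
  leaf_species : ∀ v, IsLeaf tree v → IsLeaf S (μ v)
  leaf_lbl : ∀ v, IsLeaf tree v → lbl v = Evt.extant
  internal_lbl : ∀ v, ¬ IsLeaf tree v → lbl v = Evt.dup ∨ lbl v = Evt.spec
  time_consistent : ∀ a b, Anc tree a b → Anc S (μ a) (μ b)
  spec_two_children : ∀ v, lbl v = Evt.spec →
    ¬ IsLeaf S (μ v) ∧ (childSet tree v).ncard = 2
  spec_separates : ∀ v, lbl v = Evt.spec →
    ∀ v₁ v₂, IsChild tree v₁ v → IsChild tree v₂ v → v₁ ≠ v₂ →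
      ∃ s₁ s₂, IsChild S s₁ (μ v) ∧ IsChild S s₂ (μ v) ∧ s₁ ≠ s₂ ∧
        ((Anc S s₁ (μ v₁) ∧ Anc S s₂ (μ v₂)) ∨ (Anc S s₂ (μ v₁) ∧ Anc S s₁ (μ v₂)))

variable {Γ : Type*} {VS VG₁ VG₂ : Type*} [Fintype VS] [Fintype VG₁] [Fintype VG₂]
  {S : RTree VS}

/-- The clade of a gene tree node, as a set of genes. -/
def gclade (𝒢 : Recon Γ VG₁ VS S) (v : VG₁) : Set Γ :=
  {g | Anc 𝒢.tree v (𝒢.geneLeaf g)}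

/-- Two reconciled gene trees (over the same species tree and gene set) are comparable if
corresponding extant genes map to the same species. -/
def Comparable (𝒢₁ : Recon Γ VG₁ VS S) (𝒢₂ : Recon Γ VG₂ VS S) : Prop :=
  ∀ g, 𝒢₁.μ (𝒢₁.geneLeaf g) = 𝒢₂.μ (𝒢₂.geneLeaf g)

/-- `m` is the correspondence map `v ↦ lca_{G₂}(L(G₁(v)))`. -/
def IsLcaMap (𝒢₁ : Recon Γ VG₁ VS S) (𝒢₂ : Recon Γ VG₂ VS S) (m : VG₁ → VG₂) : Prop :=
  ∀ v, IsLCA 𝒢₂.tree (𝒢₂.geneLeaf '' gclade 𝒢₁ v) (m v)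

/-- `μ` is the lca-mapping: every node maps to the lca of the species of its leaf descendants. -/
def UsesLcaMapping (𝒢 : Recon Γ VG₁ VS S) : Prop :=
  ∀ v, IsLCA S (𝒢.μ '' clade 𝒢.tree v) (𝒢.μ v)

/-- The path component `d_path(𝒢₁,𝒢₂)` (with `m` the lca correspondence map). -/
noncomputable def dPath (𝒢₁ : Recon Γ VG₁ VS S) (𝒢₂ : Recon Γ VG₂ VS S)
    (m : VG₁ → VG₂) : ℕ :=
  ∑ v : VG₁, S.adj.dist (𝒢₁.μ v) (𝒢₂.μ (m v))

/-- The label component `d_lbl(𝒢₁,𝒢₂)`. -/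
noncomputable def dLbl (𝒢₁ : Recon Γ VG₁ VS S) (𝒢₂ : Recon Γ VG₂ VS S)
    (m : VG₁ → VG₂) : ℕ :=
  {v : VG₁ | 𝒢₁.lbl v ≠ 𝒢₂.lbl (m v)}.ncard

/-- The asymmetric dissimilarity `d_asym = α·d_path + (1−α)·d_lbl`. -/
noncomputable def dAsym (α : ℝ) (𝒢₁ : Recon Γ VG₁ VS S) (𝒢₂ : Recon Γ VG₂ VS S)
    (m : VG₁ → VG₂) : ℝ :=
  α * (dPath 𝒢₁ 𝒢₂ m : ℝ) + (1 - α) * (dLbl 𝒢₁ 𝒢₂ m : ℝ)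

/-- The Path-Label Reconciliation dissimilarity `PLR(𝒢₁,𝒢₂)`, where `m₁₂`, `m₂₁` are the
lca correspondence maps in the two directions. -/
noncomputable def PLR (α : ℝ) (𝒢₁ : Recon Γ VG₁ VS S) (𝒢₂ : Recon Γ VG₂ VS S)
    (m₁₂ : VG₁ → VG₂) (m₂₁ : VG₂ → VG₁) : ℝ :=
  dAsym α 𝒢₁ 𝒢₂ m₁₂ + dAsym α 𝒢₂ 𝒢₁ m₂₁

/-- An edge `uv` (with `u` the parent of `v`) is redundant if both endpoints are duplications
mapped to the same species. -/
def RedundantEdge (𝒢 : Recon Γ VG₁ VS S) (u v : VG₁) : Prop :=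
  IsChild 𝒢.tree v u ∧ 𝒢.μ u = 𝒢.μ v ∧ 𝒢.lbl u = Evt.dup ∧ 𝒢.lbl v = Evt.dup

/-- A reconciled gene tree is least duplication-resolved if it has no redundant edge. -/
def LeastDupResolved (𝒢 : Recon Γ VG₁ VS S) : Prop :=
  ∀ u v, ¬ RedundantEdge 𝒢 u v

/-- `𝒢'` is obtained from `𝒢` by contracting the edge `uv` (`u` the parent of `v`), i.e.
deleting `v` and attaching its children to `u`; `φ` is the corresponding quotient map. -/
def IsContractionOf (𝒢 : Recon Γ VG₁ VS S) (u v : VG₁) (𝒢' : Recon Γ VG₂ VS S)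
    (φ : VG₁ → VG₂) : Prop :=
  Function.Surjective φ ∧
  φ u = φ v ∧
  (∀ a b, φ a = φ b → a = b ∨ (a = u ∧ b = v) ∨ (a = v ∧ b = u)) ∧
  (∀ x y, 𝒢'.tree.adj.Adj x y ↔
    ∃ a b, φ a = x ∧ φ b = y ∧ 𝒢.tree.adj.Adj a b ∧ ¬(a = u ∧ b = v) ∧ ¬(a = v ∧ b = u)) ∧
  𝒢'.tree.root = φ 𝒢.tree.root ∧
  (∀ g, 𝒢'.geneLeaf g = φ (𝒢.geneLeaf g)) ∧
  (∀ a, 𝒢'.μ (φ a) = 𝒢.μ a) ∧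
  (∀ a, 𝒢'.lbl (φ a) = 𝒢.lbl a)

/-- Symmetrized redundancy relation on nodes. -/
def RedundantAdj (𝒢 : Recon Γ VG₁ VS S) (a b : VG₁) : Prop :=
  RedundantEdge 𝒢 a b ∨ RedundantEdge 𝒢 b a

/-- `𝒢'` is the least duplication-resolved tree `LR(𝒢)` obtained by contracting every
redundant edge of `𝒢`; `φ` is the corresponding quotient map. -/
def IsLROf (𝒢 : Recon Γ VG₁ VS S) (𝒢' : Recon Γ VG₂ VS S) (φ : VG₁ → VG₂) : Prop :=
  Function.Surjective φ ∧
  (∀ a b, φ a = φ b ↔ Relation.EqvGen (RedundantAdj 𝒢) a b) ∧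
  (∀ x y, 𝒢'.tree.adj.Adj x y ↔
    ∃ a b, φ a = x ∧ φ b = y ∧ 𝒢.tree.adj.Adj a b ∧ ¬ RedundantAdj 𝒢 a b) ∧
  𝒢'.tree.root = φ 𝒢.tree.root ∧
  (∀ g, 𝒢'.geneLeaf g = φ (𝒢.geneLeaf g)) ∧
  (∀ a, 𝒢'.μ (φ a) = 𝒢.μ a) ∧
  (∀ a, 𝒢'.lbl (φ a) = 𝒢.lbl a)

/-- Isomorphism of reconciled gene trees: a leaf-fixing bijection preserving edges,
species maps and event labels. -/
def ReconIso (𝒢₁ : Recon Γ VG₁ VS S) (𝒢₂ : Recon Γ VG₂ VS S) : Prop :=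
  ∃ φ : VG₁ ≃ VG₂,
    (∀ g, φ (𝒢₁.geneLeaf g) = 𝒢₂.geneLeaf g) ∧
    (∀ a b, 𝒢₂.tree.adj.Adj (φ a) (φ b) ↔ 𝒢₁.tree.adj.Adj a b) ∧
    (∀ v, 𝒢₂.μ (φ v) = 𝒢₁.μ v) ∧
    (∀ v, 𝒢₂.lbl (φ v) = 𝒢₁.lbl v)

/-- Exactly one gene per species: the gene set is the set of species leaves, and each gene
resides in its own species. -/
def OneGenePerSpecies (𝒢 : Recon {s : VS // IsLeaf S s} VG₁ VS S) : Prop :=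
  ∀ g, 𝒢.μ (𝒢.geneLeaf g) = g.1

/-!
For `0 < α < 1`, `PLR` is a positive combination of the natural numbers `d_path` and `d_lbl` in
both directions, so `PLR = 0` forces both lca correspondence maps to preserve species and events.
Such a map sends redundant edges to chains of redundant edges, and its round trip `m₂₁ ∘ m₁₂`
moves a node only within its redundancy class: the node and its image lie above a common leaf,
so they are comparable, and two comparable nodes with equal species and event are joined by
duplications of that species. Hence `m₁₂` descends to a bijection `LR(𝒢₁) ≃ LR(𝒢₂)`.
Distances in a contracted tree count the surviving edges of paths, so ancestry in `LR(𝒢)` is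
ancestry in `𝒢` up to redundancy classes; the bijection thus preserves ancestry both ways, hence
the parent relation and the edges, and it carries leaves, species and events along.
-/

namespace RTree

variable (T : RTree V)

lemma connected : T.adj.Connected := T.isTree.connected

lemma eq_of_dist_eq_zero {a b : V} (h : T.adj.dist a b = 0) : a = b :=
  T.connected.dist_eq_zero_iff.mp h

lemma dist_triangle (a b c : V) : T.adj.dist a c ≤ T.adj.dist a b + T.adj.dist b c :=
  T.connected.dist_triangle

lemma walk_eq_of_isPath {x y : V} {p q : T.adj.Walk x y} (hp : p.IsPath) (hq : q.IsPath) :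
    p = q :=
  (T.isTree.existsUnique_path x y).unique hp hq

end RTree

section Ancestry

open SimpleGraph.Walk

variable {T : RTree V}

lemma anc_refl (a : V) : Anc T a a := by simp [Anc]

lemma anc_antisymm {a b : V} (hab : Anc T a b) (hba : Anc T b a) : a = b := by
  unfold Anc at hab hba
  exact T.eq_of_dist_eq_zero (by omega)

lemma anc_trans {a b c : V} (hab : Anc T a b) (hbc : Anc T b c) : Anc T a c := by
  unfold Anc at *
  have := T.dist_triangle T.root a c
  have := T.dist_triangle a b c
  omega

lemma IsChild.anc {c p : V} (h : IsChild T c p) : Anc T p c := h.2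

lemma IsChild.ne {c p : V} (h : IsChild T c p) : p ≠ c := h.1.ne.symm

lemma dist_add_dist_of_mem_support {u x a : V} (p : T.adj.Walk u x)
    (hp : p.length = T.adj.dist u x) (ha : a ∈ p.support) :
    T.adj.dist u a + T.adj.dist a x = T.adj.dist u x := by
  have hsplit := congr_arg length (p.take_spec ha)
  rw [length_append] at hsplit
  have := dist_le (p.takeUntil a ha)
  have := dist_le (p.dropUntil a ha)
  have := T.dist_triangle u a x
  omega

lemma anc_iff_mem_support {a x : V} (p : T.adj.Walk T.root x)
    (hp : p.length = T.adj.dist T.root x) : Anc T a x ↔ a ∈ p.support := by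
  refine ⟨fun h => ?_, fun ha => (dist_add_dist_of_mem_support p hp ha).symm⟩
  obtain ⟨q₁, -, hq₁⟩ := T.connected.exists_path_of_dist T.root a
  obtain ⟨q₂, -, hq₂⟩ := T.connected.exists_path_of_dist a x
  have hq : (q₁.append q₂).length = T.adj.dist T.root x := by
    rw [length_append, hq₁, hq₂]; exact h.symm
  rw [T.walk_eq_of_isPath (p.isPath_of_length_eq_dist hp) (isPath_of_length_eq_dist _ hq)]
  exact (mem_support_append_iff _ _).2 (Or.inr (start_mem_support _))

lemma anc_or_anc_of_anc {a b x : V} (ha : Anc T a x) (hb : Anc T b x) :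
    Anc T a b ∨ Anc T b a := by
  obtain ⟨p, -, hp⟩ := T.connected.exists_path_of_dist T.root x
  have hbp := (anc_iff_mem_support p hp).1 hb
  have hap := (anc_iff_mem_support p hp).1 ha
  have hsplit := congr_arg length (p.take_spec hbp)
  rw [length_append] at hsplit
  have := dist_le (p.takeUntil b hbp)
  have := dist_le (p.dropUntil b hbp)
  rw [← p.take_spec hbp, mem_support_append_iff] at hap
  unfold Anc at ha hb
  rcases hap with hap | hap
  · exact Or.inl ((anc_iff_mem_support _ (by omega)).2 hap)
  · have := dist_add_dist_of_mem_support _ (by omega) hap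
    right; unfold Anc; omega

lemma exists_isChild_of_anc {a b : V} (h : Anc T a b) (hne : a ≠ b) :
    ∃ c, IsChild T c a ∧ Anc T c b ∧ T.adj.dist c b + 1 = T.adj.dist a b := by
  obtain ⟨p, -, hp⟩ := T.connected.exists_path_of_dist a b
  cases p with
  | nil => exact absurd rfl hne
  | @cons _ c _ hac q =>
    rw [length_cons] at hp
    have := dist_le q
    have := T.dist_triangle a c b
    have := T.dist_triangle T.root c b
    have := T.dist_triangle T.root a c
    have hac' : T.adj.dist a c = 1 := dist_eq_one_iff_adj.2 hac
    unfold Anc at h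
    refine ⟨c, ⟨hac.symm, ?_⟩, ?_, by omega⟩ <;> unfold Anc <;> omega

theorem anc_iff_reflTransGen {a b : V} :
    Anc T a b ↔ Relation.ReflTransGen (fun x y => IsChild T y x) a b := by
  refine ⟨fun h => ?_, fun h => ?_⟩
  · induction hn : T.adj.dist a b using Nat.strong_induction_on generalizing a with
    | _ n ih =>
      by_cases hab : a = b
      · exact hab ▸ Relation.ReflTransGen.refl
      obtain ⟨c, hc, hcb, hdist⟩ := exists_isChild_of_anc h hab
      exact Relation.ReflTransGen.head hc (ih _ (by omega) hcb rfl)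
  · induction h with
    | refl => exact anc_refl a
    | tail _ hc ih => exact anc_trans ih hc.anc

lemma IsLeaf.eq_of_anc {v x : V} (hv : IsLeaf T v) (h : Anc T v x) : x = v := by
  rcases (anc_iff_reflTransGen.1 h).cases_head with rfl | ⟨c, hc, -⟩
  · rfl
  · exact absurd hc (hv c)

lemma exists_isLeaf_anc (v : V) : ∃ x, IsLeaf T x ∧ Anc T v x := by
  obtain ⟨x, hx, hmax⟩ := (Finset.univ.filter (Anc T v)).exists_max_image
    (T.adj.dist T.root) ⟨v, by simp [anc_refl]⟩
  simp only [Finset.mem_filter, Finset.mem_univ, true_and] at hx hmax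
  refine ⟨x, fun c hc => ?_, hx⟩
  have := hmax c (anc_trans hx hc.anc)
  have hxc := hc.anc
  unfold Anc at hxc
  rw [dist_eq_one_iff_adj.2 hc.1.symm] at hxc
  omega

lemma adj_iff_isChild_or_isChild {a b : V} :
    T.adj.Adj a b ↔ IsChild T b a ∨ IsChild T a b := by
  refine ⟨fun h => ?_, by rintro (⟨h, -⟩ | ⟨h, -⟩) <;> [exact h.symm; exact h]⟩
  have hab : T.adj.dist a b = 1 := dist_eq_one_iff_adj.2 h
  have hba : T.adj.dist b a = 1 := dist_eq_one_iff_adj.2 h.symm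
  rcases T.isTree.dist_eq_dist_add_one_of_adj T.root h with h' | h'
  · exact Or.inr ⟨h, by unfold Anc; omega⟩
  · exact Or.inl ⟨h.symm, by unfold Anc; omega⟩

lemma isChild_iff {c p : V} :
    IsChild T c p ↔ Anc T p c ∧ p ≠ c ∧ ∀ z, Anc T p z → Anc T z c → z = p ∨ z = c := by
  refine ⟨fun h => ⟨h.anc, h.ne, fun z hpz hzc => ?_⟩, fun ⟨h, hne, hcov⟩ => ?_⟩
  · have hpc := h.anc
    unfold Anc at hpc hpz hzc
    rw [dist_eq_one_iff_adj.2 h.1.symm] at hpc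
    rcases Nat.eq_zero_or_pos (T.adj.dist p z) with h0 | h0
    · exact Or.inl (T.eq_of_dist_eq_zero h0).symm
    · exact Or.inr (T.eq_of_dist_eq_zero (by omega))
  · obtain ⟨c', hc', hc'c, -⟩ := exists_isChild_of_anc h hne
    rcases hcov c' hc'.anc hc'c with rfl | rfl
    · exact absurd rfl hc'.ne
    · exact hc'

lemma adj_map_iff_of_anc_map_iff {W : Type*} [Fintype W] {T' : RTree W} (e : V ≃ W)
    (he : ∀ a b, Anc T' (e a) (e b) ↔ Anc T a b) (a b : V) :
    T'.adj.Adj (e a) (e b) ↔ T.adj.Adj a b := by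
  have hchild : ∀ a b, IsChild T' (e b) (e a) ↔ IsChild T b a := by
    intro a b
    simp only [isChild_iff, ← e.forall_congr_right, he, e.injective.ne_iff, e.injective.eq_iff]
  rw [adj_iff_isChild_or_isChild, adj_iff_isChild_or_isChild, hchild, hchild]

end Ancestry

namespace RTree

open SimpleGraph.Walk

variable {W : Type*} [Fintype W] {T : RTree V} {T' : RTree W} {R : V → V → Prop} {φ : V → W}

/-- The length of the image of `w` in the tree obtained by contracting the `R`-edges. -/
noncomputable def quotLength (R : V → V → Prop) {x y : V} (w : T.adj.Walk x y) : ℕ :=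
  w.darts.countP fun d => ¬ R d.fst d.snd

@[simp]
lemma quotLength_nil {x : V} : quotLength R (nil : T.adj.Walk x x) = 0 := by
  simp [quotLength]

lemma quotLength_cons {a b y : V} (h : T.adj.Adj a b) (w : T.adj.Walk b y) :
    quotLength R (cons h w) = quotLength R w + if R a b then 0 else 1 := by
  by_cases hR : R a b <;> simp [quotLength, hR]

lemma quotLength_append {x y z : V} (w : T.adj.Walk x y) (w' : T.adj.Walk y z) :
    quotLength R (w.append w') = quotLength R w + quotLength R w' := by
  simp [quotLength, darts_append]

lemma quotLength_reverse (hR : ∀ a b, R a b → R b a) {x y : V} (w : T.adj.Walk x y) :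
    quotLength R w.reverse = quotLength R w := by
  simp only [quotLength, darts_reverse, List.countP_reverse, List.countP_map]
  congr 1
  ext d
  simp only [Function.comp_apply, Dart.symm_toProd, Prod.fst_swap, Prod.snd_swap,
    decide_eq_decide]
  exact not_congr ⟨hR _ _, hR _ _⟩

lemma quotLength_le_of_isPath {x y : V} {p : T.adj.Walk x y} (hp : p.IsPath)
    (w : T.adj.Walk x y) : quotLength R p ≤ quotLength R w := by
  rw [T.walk_eq_of_isPath hp w.bypass_isPath]
  exact w.darts_bypass_sublist_darts.countP_le

lemma exists_walk_quotLength_eq_zero (hR : ∀ a b, R a b → R b a)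
    (hRadj : ∀ ⦃a b⦄, R a b → T.adj.Adj a b) {x y : V} (h : Relation.EqvGen R x y) :
    ∃ w : T.adj.Walk x y, quotLength R w = 0 := by
  induction h with
  | rel a b hab => exact ⟨cons (hRadj hab) nil, by simp [quotLength_cons, hab]⟩
  | refl a => exact ⟨nil, quotLength_nil⟩
  | symm a b _ ih =>
    obtain ⟨w, hw⟩ := ih
    exact ⟨w.reverse, by rw [quotLength_reverse hR, hw]⟩
  | trans a b c _ _ ih₁ ih₂ =>
    obtain ⟨w₁, hw₁⟩ := ih₁
    obtain ⟨w₂, hw₂⟩ := ih₂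
    exact ⟨w₁.append w₂, by rw [quotLength_append, hw₁, hw₂]⟩

structure IsQuotient (T : RTree V) (T' : RTree W) (R : V → V → Prop) (φ : V → W) : Prop where
  symm : ∀ a b, R a b → R b a
  adj_of_rel : ∀ ⦃a b⦄, R a b → T.adj.Adj a b
  eq_iff : ∀ a b, φ a = φ b ↔ Relation.EqvGen R a b
  adj_iff : ∀ x y, T'.adj.Adj x y ↔ ∃ a b, φ a = x ∧ φ b = y ∧ T.adj.Adj a b ∧ ¬ R a b
  root_eq : T'.root = φ T.root

namespace IsQuotient

variable (H : IsQuotient T T' R φ)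
include H

lemma exists_map_walk {x y : V} (w : T.adj.Walk x y) :
    ∃ w' : T'.adj.Walk (φ x) (φ y), w'.length = quotLength R w ∧
      ∀ u, u ∈ w'.support ↔ ∃ a ∈ w.support, φ a = u := by
  induction w with
  | nil => exact ⟨nil, rfl, by simp [eq_comm]⟩
  | @cons a b c hab w ih =>
    obtain ⟨w', hlen, hsupp⟩ := ih
    rw [quotLength_cons]
    by_cases hR : R a b
    · have hφ : φ a = φ b := (H.eq_iff a b).2 (.rel _ _ hR)
      refine ⟨w'.copy hφ.symm rfl, by simp [hlen, hR], fun u => ?_⟩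
      simp only [support_copy, hsupp, support_cons, List.mem_cons, exists_eq_or_imp, hφ]
      exact ⟨Or.inr, fun h => h.elim (fun hb => ⟨b, w.start_mem_support, hb⟩) id⟩
    · have hadj : T'.adj.Adj (φ a) (φ b) := (H.adj_iff _ _).2 ⟨a, b, rfl, rfl, hab, hR⟩
      exact ⟨cons hadj w', by simp [hlen, hR], by simp [hsupp, eq_comm]⟩

lemma exists_lift_walk {u v : W} (w' : T'.adj.Walk u v) {x y : V} (hx : φ x = u)
    (hy : φ y = v) : ∃ w : T.adj.Walk x y, quotLength R w ≤ w'.length := by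
  induction w' generalizing x with
  | nil =>
    exact exists_walk_quotLength_eq_zero H.symm H.adj_of_rel
      ((H.eq_iff x y).1 (hx.trans hy.symm)) |>.imp fun _ h => h.le
  | cons hadj w' ih =>
    obtain ⟨a, b, ha, hb, hab, hR⟩ := (H.adj_iff _ _).1 hadj
    obtain ⟨w₀, hw₀⟩ :=
      exists_walk_quotLength_eq_zero H.symm H.adj_of_rel ((H.eq_iff x a).1 (hx.trans ha.symm))
    obtain ⟨w, hw⟩ := ih hb hy
    refine ⟨w₀.append (cons hab w), ?_⟩
    rw [quotLength_append, quotLength_cons, if_neg hR, length_cons]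
    omega

lemma exists_map_walk_length_eq_dist {x y : V} {p : T.adj.Walk x y} (hp : p.IsPath) :
    ∃ w' : T'.adj.Walk (φ x) (φ y), w'.length = T'.adj.dist (φ x) (φ y) ∧
      ∀ u, u ∈ w'.support ↔ ∃ a ∈ p.support, φ a = u := by
  obtain ⟨w', hlen, hsupp⟩ := H.exists_map_walk p
  refine ⟨w', le_antisymm ?_ (dist_le w'), hsupp⟩
  obtain ⟨q, hq⟩ := T'.connected.exists_walk_length_eq_dist (φ x) (φ y)
  obtain ⟨w, hw⟩ := H.exists_lift_walk q rfl rfl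
  calc w'.length = quotLength R p := hlen
    _ ≤ quotLength R w := quotLength_le_of_isPath hp w
    _ ≤ q.length := hw
    _ = _ := hq

lemma exists_map_geodesic_from_root (y : V) :
    ∃ (p : T.adj.Walk T.root y) (w' : T'.adj.Walk T'.root (φ y)),
      p.length = T.adj.dist T.root y ∧ w'.length = T'.adj.dist T'.root (φ y) ∧
      ∀ u, u ∈ w'.support ↔ ∃ a ∈ p.support, φ a = u := by
  obtain ⟨p, hp, hplen⟩ := T.connected.exists_path_of_dist T.root y
  obtain ⟨w', hlen, hsupp⟩ := H.exists_map_walk_length_eq_dist hp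
  exact ⟨p, w'.copy H.root_eq.symm rfl, hplen, by simp [hlen, H.root_eq], by simpa using hsupp⟩

lemma anc_map {x y : V} (h : Anc T x y) : Anc T' (φ x) (φ y) := by
  obtain ⟨p, w', hp, hw', hsupp⟩ := H.exists_map_geodesic_from_root y
  exact (anc_iff_mem_support w' hw').2 ((hsupp _).2 ⟨x, (anc_iff_mem_support p hp).1 h, rfl⟩)

lemma exists_anc_of_anc_map {x y : V} (h : Anc T' (φ x) (φ y)) :
    ∃ x', φ x' = φ x ∧ Anc T x' y := by
  obtain ⟨p, w', hp, hw', hsupp⟩ := H.exists_map_geodesic_from_root y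
  obtain ⟨x', hx', hφ⟩ := (hsupp _).1 ((anc_iff_mem_support w' hw').1 h)
  exact ⟨x', hφ, (anc_iff_mem_support p hp).2 hx'⟩

end IsQuotient

end RTree

namespace Recon

variable (𝒢 : Recon Γ VG₁ VS S)

lemma exists_anc_geneLeaf (v : VG₁) : ∃ g, Anc 𝒢.tree v (𝒢.geneLeaf g) := by
  obtain ⟨x, hx, hvx⟩ := exists_isLeaf_anc (T := 𝒢.tree) v
  obtain ⟨g, rfl⟩ := (𝒢.geneLeaf_range x).1 hx
  exact ⟨g, hvx⟩

variable {𝒢}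

lemma μ_eq_of_anc_of_anc {a b c : VG₁} (hac : Anc 𝒢.tree a c) (hcb : Anc 𝒢.tree c b)
    (hμ : 𝒢.μ a = 𝒢.μ b) : 𝒢.μ c = 𝒢.μ a :=
  anc_antisymm (hμ ▸ 𝒢.time_consistent c b hcb) (𝒢.time_consistent a c hac)

/-- The children of a speciation lie below distinct children of its species, so a strict
descendant cannot keep that species. -/
lemma lbl_ne_spec_of_anc {a b : VG₁} (hab : Anc 𝒢.tree a b) (hne : a ≠ b)
    (hμ : 𝒢.μ a = 𝒢.μ b) : 𝒢.lbl a ≠ Evt.spec := by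
  intro hspec
  obtain ⟨c, hc, hcb, -⟩ := exists_isChild_of_anc hab hne
  have hμc := μ_eq_of_anc_of_anc hc.anc hcb hμ
  obtain ⟨c', hc', hc'c⟩ :=
    Set.exists_ne_of_one_lt_ncard (by rw [(𝒢.spec_two_children a hspec).2]; norm_num) c
  obtain ⟨s₁, s₂, hs₁, hs₂, -, hsep⟩ := 𝒢.spec_separates a hspec c c' hc hc' hc'c.symm
  have key : ∀ s, IsChild S s (𝒢.μ a) → Anc S s (𝒢.μ c) → False := fun s hs hsc =>
    hs.ne (anc_antisymm hs.anc (hμc ▸ hsc))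
  rcases hsep with ⟨h, -⟩ | ⟨h, -⟩
  · exact key s₁ hs₁ h
  · exact key s₂ hs₂ h

lemma lbl_eq_dup_of_anc {a b : VG₁} (hab : Anc 𝒢.tree a b) (hne : a ≠ b)
    (hμ : 𝒢.μ a = 𝒢.μ b) : 𝒢.lbl a = Evt.dup := by
  obtain ⟨c, hc, -⟩ := exists_isChild_of_anc hab hne
  exact (𝒢.internal_lbl a (fun h => h c hc)).resolve_right (lbl_ne_spec_of_anc hab hne hμ)

lemma redundantAdj_symm (a b : VG₁) : RedundantAdj 𝒢 a b → RedundantAdj 𝒢 b a :=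
  Or.symm

lemma adj_of_redundantAdj {a b : VG₁} (h : RedundantAdj 𝒢 a b) : 𝒢.tree.adj.Adj a b := by
  rcases h with ⟨h, -⟩ | ⟨h, -⟩
  exacts [h.1.symm, h.1]

/-- By `lbl_eq_dup_of_anc`, every node on the path from `a` down to `b`, except possibly `b`,
is a duplication with the species of `b`, so every edge of that path is redundant. -/
lemma eqvGen_redundantAdj_of_anc {a b : VG₁} (hab : Anc 𝒢.tree a b) (hμ : 𝒢.μ a = 𝒢.μ b)
    (hl : 𝒢.lbl a = 𝒢.lbl b) : Relation.EqvGen (RedundantAdj 𝒢) a b := by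
  induction anc_iff_reflTransGen.1 hab using Relation.ReflTransGen.head_induction_on with
  | refl => exact .refl _
  | @head a c hc hcb ih =>
    have hcb := anc_iff_reflTransGen.2 hcb
    have hμc := μ_eq_of_anc_of_anc hc.anc hcb hμ
    have hne : a ≠ b := fun h => hc.ne (anc_antisymm hc.anc (h ▸ hcb))
    have hla := lbl_eq_dup_of_anc hab hne hμ
    have hlc : 𝒢.lbl c = Evt.dup := by
      by_cases hcb' : c = b
      · rw [hcb', ← hl, hla]
      · exact lbl_eq_dup_of_anc hcb hcb' (hμc.trans hμ)
    exact .trans _ _ _ (.rel _ _ (Or.inl ⟨hc, hμc.symm, hla, hlc⟩))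
      (ih hcb (hμc.trans hμ) (hlc.trans (hla.symm.trans hl)))

end Recon

lemma IsLROf.isQuotient {VG' : Type*} [Fintype VG'] {𝒢 : Recon Γ VG₁ VS S}
    {L : Recon Γ VG' VS S} {φ : VG₁ → VG'} (h : IsLROf 𝒢 L φ) :
    𝒢.tree.IsQuotient L.tree (RedundantAdj 𝒢) φ :=
  ⟨Recon.redundantAdj_symm, fun _ _ => Recon.adj_of_redundantAdj, h.2.1, h.2.2.1, h.2.2.2.1⟩

section LcaMap

variable {𝒢₁ : Recon Γ VG₁ VS S} {𝒢₂ : Recon Γ VG₂ VS S} {m : VG₁ → VG₂}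

namespace IsLcaMap

variable (hm : IsLcaMap 𝒢₁ 𝒢₂ m)
include hm

lemma anc_geneLeaf {v : VG₁} {g : Γ} (h : Anc 𝒢₁.tree v (𝒢₁.geneLeaf g)) :
    Anc 𝒢₂.tree (m v) (𝒢₂.geneLeaf g) :=
  (hm v).1 _ ⟨g, h, rfl⟩

lemma anc_map {a b : VG₁} (h : Anc 𝒢₁.tree a b) : Anc 𝒢₂.tree (m a) (m b) :=
  (hm b).2 _ fun _ ⟨_, hg, hx⟩ => hx ▸ hm.anc_geneLeaf (anc_trans h hg)

lemma map_geneLeaf (g : Γ) : m (𝒢₁.geneLeaf g) = 𝒢₂.geneLeaf g := by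
  refine anc_antisymm (hm.anc_geneLeaf (anc_refl _)) ((hm _).2 _ ?_)
  rintro _ ⟨g', hg', rfl⟩
  have hleaf : IsLeaf 𝒢₁.tree (𝒢₁.geneLeaf g) := (𝒢₁.geneLeaf_range _).2 ⟨g, rfl⟩
  rw [𝒢₁.geneLeaf_inj (hleaf.eq_of_anc hg')]
  exact anc_refl _

end IsLcaMap

structure IsFaithfulLcaMap (𝒢₁ : Recon Γ VG₁ VS S) (𝒢₂ : Recon Γ VG₂ VS S) (m : VG₁ → VG₂) :
    Prop where
  isLcaMap : IsLcaMap 𝒢₁ 𝒢₂ m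
  μ_map : ∀ v, 𝒢₂.μ (m v) = 𝒢₁.μ v
  lbl_map : ∀ v, 𝒢₂.lbl (m v) = 𝒢₁.lbl v

namespace IsFaithfulLcaMap

lemma eqvGen_map (hm : IsFaithfulLcaMap 𝒢₁ 𝒢₂ m) {a b : VG₁}
    (h : Relation.EqvGen (RedundantAdj 𝒢₁) a b) :
    Relation.EqvGen (RedundantAdj 𝒢₂) (m a) (m b) := by
  have hedge : ∀ {p q}, RedundantEdge 𝒢₁ p q → Relation.EqvGen (RedundantAdj 𝒢₂) (m p) (m q) :=
    fun ⟨hqp, hμ, hlp, hlq⟩ => Recon.eqvGen_redundantAdj_of_anc (hm.isLcaMap.anc_map hqp.anc)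
      (by rw [hm.μ_map, hm.μ_map, hμ]) (by rw [hm.lbl_map, hm.lbl_map, hlp, hlq])
  induction h with
  | rel x y hxy => exact hxy.elim hedge fun h => .symm _ _ (hedge h)
  | refl x => exact .refl _
  | symm x y _ ih => exact .symm _ _ ih
  | trans x y z _ _ ih₁ ih₂ => exact .trans _ _ _ ih₁ ih₂

/-- `v` and its image under the round trip both lie above any leaf below `v`, hence are
comparable. -/
lemma eqvGen_comp {m' : VG₂ → VG₁} (hm : IsFaithfulLcaMap 𝒢₁ 𝒢₂ m)
    (hm' : IsFaithfulLcaMap 𝒢₂ 𝒢₁ m') (v : VG₁) :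
    Relation.EqvGen (RedundantAdj 𝒢₁) (m' (m v)) v := by
  obtain ⟨g, hg⟩ := 𝒢₁.exists_anc_geneLeaf v
  have hμ : 𝒢₁.μ (m' (m v)) = 𝒢₁.μ v := by rw [hm'.μ_map, hm.μ_map]
  have hl : 𝒢₁.lbl (m' (m v)) = 𝒢₁.lbl v := by rw [hm'.lbl_map, hm.lbl_map]
  rcases anc_or_anc_of_anc (hm'.isLcaMap.anc_geneLeaf (hm.isLcaMap.anc_geneLeaf hg)) hg with h | h
  · exact Recon.eqvGen_redundantAdj_of_anc h hμ hl
  · exact .symm _ _ (Recon.eqvGen_redundantAdj_of_anc h hμ.symm hl.symm)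

variable {VG₁' VG₂' : Type*} [Fintype VG₁'] [Fintype VG₂'] {L₁ : Recon Γ VG₁' VS S}
  {L₂ : Recon Γ VG₂' VS S} {φ₁ : VG₁ → VG₁'} {φ₂ : VG₂ → VG₂'}

lemma map_eq_map (hm : IsFaithfulLcaMap 𝒢₁ 𝒢₂ m) (hφ₁ : IsLROf 𝒢₁ L₁ φ₁)
    (hφ₂ : IsLROf 𝒢₂ L₂ φ₂) {a b : VG₁} (h : φ₁ a = φ₁ b) : φ₂ (m a) = φ₂ (m b) :=
  (hφ₂.2.1 _ _).2 (hm.eqvGen_map ((hφ₁.2.1 _ _).1 h))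

lemma anc_map_of_factor (hm : IsFaithfulLcaMap 𝒢₁ 𝒢₂ m) (hφ₁ : IsLROf 𝒢₁ L₁ φ₁)
    (hφ₂ : IsLROf 𝒢₂ L₂ φ₂) {ψ : VG₁' → VG₂'} (hψ : ∀ a, ψ (φ₁ a) = φ₂ (m a)) {x y : VG₁'}
    (h : Anc L₁.tree x y) : Anc L₂.tree (ψ x) (ψ y) := by
  obtain ⟨a, rfl⟩ := hφ₁.1 x
  obtain ⟨b, rfl⟩ := hφ₁.1 y
  obtain ⟨a', ha', hanc⟩ := hφ₁.isQuotient.exists_anc_of_anc_map h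
  rw [hψ, hψ, ← hm.map_eq_map hφ₁ hφ₂ ha']
  exact hφ₂.isQuotient.anc_map (hm.isLcaMap.anc_map hanc)

end IsFaithfulLcaMap

end LcaMap

theorem Function.Surjective.exists_equiv_of_comp {α β γ δ : Type*} {p : α → γ} {q : β → δ}
    (hp : Function.Surjective p) (hq : Function.Surjective q) {f : α → β} {g : β → α}
    (hf : ∀ a b, p a = p b → q (f a) = q (f b)) (hg : ∀ a b, q a = q b → p (g a) = p (g b))
    (hgf : ∀ a, p (g (f a)) = p a) (hfg : ∀ b, q (f (g b)) = q b) :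
    ∃ e : γ ≃ δ, (∀ a, e (p a) = q (f a)) ∧ ∀ b, e.symm (q b) = p (g b) := by
  have hF : ∀ a, q (f (Function.surjInv hp (p a))) = q (f a) :=
    fun a => hf _ _ (Function.surjInv_eq hp _)
  have hG : ∀ b, p (g (Function.surjInv hq (q b))) = p (g b) :=
    fun b => hg _ _ (Function.surjInv_eq hq _)
  refine ⟨⟨fun x => q (f (Function.surjInv hp x)), fun y => p (g (Function.surjInv hq y)),
    fun x => ?_, fun y => ?_⟩, hF, hG⟩
  · obtain ⟨a, rfl⟩ := hp x
    simp only [hF, hG, hgf]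
  · obtain ⟨b, rfl⟩ := hq y
    simp only [hG, hF, hfg]

section Dissimilarity

variable {𝒢₁ : Recon Γ VG₁ VS S} {𝒢₂ : Recon Γ VG₂ VS S} {m₁₂ : VG₁ → VG₂} {m₂₁ : VG₂ → VG₁}

theorem reconIso_of_isFaithfulLcaMap {VG₁' VG₂' : Type*} [Fintype VG₁'] [Fintype VG₂']
    {L₁ : Recon Γ VG₁' VS S} {L₂ : Recon Γ VG₂' VS S} {φ₁ : VG₁ → VG₁'} {φ₂ : VG₂ → VG₂'}
    (hφ₁ : IsLROf 𝒢₁ L₁ φ₁) (hφ₂ : IsLROf 𝒢₂ L₂ φ₂) (h₁₂ : IsFaithfulLcaMap 𝒢₁ 𝒢₂ m₁₂)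
    (h₂₁ : IsFaithfulLcaMap 𝒢₂ 𝒢₁ m₂₁) : ReconIso L₁ L₂ := by
  obtain ⟨e, he, he'⟩ := hφ₁.1.exists_equiv_of_comp hφ₂.1
    (fun _ _ => h₁₂.map_eq_map hφ₁ hφ₂) (fun _ _ => h₂₁.map_eq_map hφ₂ hφ₁)
    (fun a => (hφ₁.2.1 _ _).2 (h₁₂.eqvGen_comp h₂₁ a))
    (fun b => (hφ₂.2.1 _ _).2 (h₂₁.eqvGen_comp h₁₂ b))
  have hanc : ∀ x y, Anc L₂.tree (e x) (e y) ↔ Anc L₁.tree x y := fun x y =>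
    ⟨fun h => by simpa using h₂₁.anc_map_of_factor hφ₂ hφ₁ he' h, h₁₂.anc_map_of_factor hφ₁ hφ₂ he⟩
  obtain ⟨hsurj, -, -, -, hleaf₁, hμ₁, hlbl₁⟩ := hφ₁
  obtain ⟨-, -, -, -, hleaf₂, hμ₂, hlbl₂⟩ := hφ₂
  refine ⟨e, fun g => ?_, adj_map_iff_of_anc_map_iff e hanc, fun v => ?_, fun v => ?_⟩
  · rw [hleaf₁, he, h₁₂.isLcaMap.map_geneLeaf, hleaf₂]
  · obtain ⟨a, rfl⟩ := hsurj v
    rw [he, hμ₂, hμ₁, h₁₂.μ_map]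
  · obtain ⟨a, rfl⟩ := hsurj v
    rw [he, hlbl₂, hlbl₁, h₁₂.lbl_map]

lemma dPath_eq_zero_iff : dPath 𝒢₁ 𝒢₂ m₁₂ = 0 ↔ ∀ v, 𝒢₂.μ (m₁₂ v) = 𝒢₁.μ v := by
  simp only [dPath, Finset.sum_eq_zero_iff, Finset.mem_univ, true_implies,
    S.connected.dist_eq_zero_iff]
  exact forall_congr' fun _ => eq_comm

lemma dLbl_eq_zero_iff : dLbl 𝒢₁ 𝒢₂ m₁₂ = 0 ↔ ∀ v, 𝒢₂.lbl (m₁₂ v) = 𝒢₁.lbl v := by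
  rw [dLbl, Set.ncard_eq_zero, Set.eq_empty_iff_forall_notMem]
  exact forall_congr' fun _ => not_not.trans eq_comm

variable {α : ℝ}

lemma dAsym_nonneg (hα₀ : 0 ≤ α) (hα₁ : α ≤ 1) : 0 ≤ dAsym α 𝒢₁ 𝒢₂ m₁₂ := by
  have := sub_nonneg.2 hα₁
  unfold dAsym
  positivity

lemma dAsym_eq_zero_iff (hα₀ : 0 < α) (hα₁ : α < 1) :
    dAsym α 𝒢₁ 𝒢₂ m₁₂ = 0 ↔ dPath 𝒢₁ 𝒢₂ m₁₂ = 0 ∧ dLbl 𝒢₁ 𝒢₂ m₁₂ = 0 := by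
  have := sub_pos.2 hα₁
  rw [dAsym, add_eq_zero_iff_of_nonneg (by positivity) (by positivity)]
  simp [hα₀.ne', this.ne']

lemma IsLcaMap.isFaithfulLcaMap_of_dAsym_eq_zero (hm : IsLcaMap 𝒢₁ 𝒢₂ m₁₂) (hα₀ : 0 < α)
    (hα₁ : α < 1) (h : dAsym α 𝒢₁ 𝒢₂ m₁₂ = 0) : IsFaithfulLcaMap 𝒢₁ 𝒢₂ m₁₂ := by
  rw [dAsym_eq_zero_iff hα₀ hα₁, dPath_eq_zero_iff, dLbl_eq_zero_iff] at h
  exact ⟨hm, h.1, h.2⟩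

end Dissimilarity

theorem stmt5_general {VG₁' VG₂' : Type*} [Fintype VG₁'] [Fintype VG₂']
    (𝒢₁ : Recon Γ VG₁ VS S) (𝒢₂ : Recon Γ VG₂ VS S)
    (L₁ : Recon Γ VG₁' VS S) (L₂ : Recon Γ VG₂' VS S)
    (α : ℝ) (hα₀ : 0 < α) (hα₁ : α < 1)
    (φ₁ : VG₁ → VG₁') (hφ₁ : IsLROf 𝒢₁ L₁ φ₁)
    (φ₂ : VG₂ → VG₂') (hφ₂ : IsLROf 𝒢₂ L₂ φ₂)
    (hniso : ¬ ReconIso L₁ L₂)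
    (m₁₂ : VG₁ → VG₂) (m₂₁ : VG₂ → VG₁)
    (hm₁₂ : IsLcaMap 𝒢₁ 𝒢₂ m₁₂) (hm₂₁ : IsLcaMap 𝒢₂ 𝒢₁ m₂₁) :
    0 < PLR α 𝒢₁ 𝒢₂ m₁₂ m₂₁ := by
  have h₁₂ : 0 ≤ dAsym α 𝒢₁ 𝒢₂ m₁₂ := dAsym_nonneg hα₀.le hα₁.le
  have h₂₁ : 0 ≤ dAsym α 𝒢₂ 𝒢₁ m₂₁ := dAsym_nonneg hα₀.le hα₁.le
  refine (add_nonneg h₁₂ h₂₁).lt_of_ne fun h => hniso ?_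
  obtain ⟨hd₁₂, hd₂₁⟩ := (add_eq_zero_iff_of_nonneg h₁₂ h₂₁).1 h.symm
  exact reconIso_of_isFaithfulLcaMap hφ₁ hφ₂ (hm₁₂.isFaithfulLcaMap_of_dAsym_eq_zero hα₀ hα₁ hd₁₂)
    (hm₂₁.isFaithfulLcaMap_of_dAsym_eq_zero hα₀ hα₁ hd₂₁)

/-- positivity of PLR under `≄_d` for `α ∈ (0,1)`. -/
theorem stmt5 {VG₁' VG₂' : Type*} [Fintype VG₁'] [Fintype VG₂']
    (hS : IsSpeciesTree S)
    (𝒢₁ : Recon Γ VG₁ VS S) (𝒢₂ : Recon Γ VG₂ VS S)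
    (L₁ : Recon Γ VG₁' VS S) (L₂ : Recon Γ VG₂' VS S)
    (α : ℝ) (hα₀ : 0 < α) (hα₁ : α < 1)
    (hcomp : Comparable 𝒢₁ 𝒢₂)
    (φ₁ : VG₁ → VG₁') (hφ₁ : IsLROf 𝒢₁ L₁ φ₁)
    (φ₂ : VG₂ → VG₂') (hφ₂ : IsLROf 𝒢₂ L₂ φ₂)
    (hniso : ¬ ReconIso L₁ L₂)
    (m₁₂ : VG₁ → VG₂) (m₂₁ : VG₂ → VG₁)
    (hm₁₂ : IsLcaMap 𝒢₁ 𝒢₂ m₁₂) (hm₂₁ : IsLcaMap 𝒢₂ 𝒢₁ m₂₁) :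
    0 < PLR α 𝒢₁ 𝒢₂ m₁₂ m₂₁ :=
  stmt5_general 𝒢₁ 𝒢₂ L₁ L₂ α hα₀ hα₁ φ₁ hφ₁ φ₂ hφ₂ hniso m₁₂ m₂₁ hm₁₂ hm₂₁
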